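/- arXiv:2601.07936 — 4 statements merged into one kernel-verified Lean document; each statement's English description precedes it below -/
import Mathlib

section
/- Suppose φ is even. For every test function ψ, the limit as ε → 0⁺ of ∫_ℝ [ (H_ε(x) − 1/2) · δ'_ε(x) + (δ_ε(x))² ] · ψ(x) dx equals 0, where δ'_ε(x) = ε⁻² φ'(x/ε). (This expresses the association H·δ' ≈ (1/2)δ' − δ² in the Colombeau algebra.) -/
open MeasureTheory Filter

/-- Integral of the derivative of a C¹ compactly supported function is zero. -/
lemma my_integral_deriv_eq_zero {f : ℝ → ℝ} (h1 : ContDiff ℝ 1 f)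
    (h2 : HasCompactSupport f) : ∫ u, deriv f u = 0 := by
  have hint : Integrable (deriv f) :=
    (h1.continuous_deriv le_rfl).integrable_of_hasCompactSupport h2.deriv
  have hIic := h2.integral_Iic_deriv_eq h1 0
  have hIoi := h2.integral_Ioi_deriv_eq h1 0
  rw [← intervalIntegral.integral_Iic_add_Ioi hint.integrableOn hint.integrableOn, hIic, hIoi]
  ring

/-- With φ even, for every test function ψ,
lim_{ε→0⁺} ∫ [ (H_ε(x) − 1/2)·δ'_ε(x) + (δ_ε(x))² ]·ψ(x) dx = 0,
where δ'_ε(x) = ε⁻² φ'(x/ε).  (H·δ' ≈ (1/2)δ' − δ².) -/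
theorem stmt_2 (φ : ℝ → ℝ)
    (hφ : ContDiff ℝ (⊤ : ℕ∞) φ) (hφsupp : HasCompactSupport φ)
    (hone : ∫ s, φ s = 1)
    (heven : ∀ s, φ (-s) = φ s)
    (ψ : ℝ → ℝ) (hψ : ContDiff ℝ (⊤ : ℕ∞) ψ) (hψsupp : HasCompactSupport ψ) :
    Tendsto (fun ε : ℝ =>
        ∫ x, (((∫ s in Set.Iic (x / ε), φ s) - 1 / 2) * (ε⁻¹ ^ 2 * deriv φ (x / ε))
              + (ε⁻¹ * φ (x / ε)) ^ 2) * ψ x)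
      (nhdsWithin 0 (Set.Ioi 0)) (nhds 0) := by
  have hφc : Continuous φ := hφ.continuous
  have hφint : Integrable φ := hφc.integrable_of_hasCompactSupport hφsupp
  set F : ℝ → ℝ := fun u => ∫ s in Set.Iic u, φ s with hFdef
  set g : ℝ → ℝ := fun u => (F u - 1/2) * φ u with hgdef
  -- F has derivative φ
  have hkey : ∀ u : ℝ, F u = (∫ s in Set.Iic (0:ℝ), φ s) + ∫ s in (0:ℝ)..u, φ s := by
    intro u
    have := intervalIntegral.integral_Iic_sub_Iic hφint.integrableOn hφint.integrableOn
      (a := 0) (b := u)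
    simp only [hFdef]
    linarith
  have hFderiv : ∀ u : ℝ, HasDerivAt F (φ u) u := by
    intro u
    have h1 : HasDerivAt (fun v => ∫ s in (0:ℝ)..v, φ s) (φ u) u :=
      intervalIntegral.integral_hasDerivAt_right hφint.intervalIntegrable
        (hφc.stronglyMeasurableAtFilter _ _) hφc.continuousAt
    have h2 := h1.const_add (∫ s in Set.Iic (0:ℝ), φ s)
    exact h2.congr_of_eventuallyEq (Filter.Eventually.of_forall fun x => hkey x)
  have hFcont : Continuous F := by
    have : Differentiable ℝ F := fun u => (hFderiv u).differentiableAt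
    exact this.continuous
  have hF1 : ContDiff ℝ 1 F := by
    rw [contDiff_one_iff_deriv]
    refine ⟨fun u => (hFderiv u).differentiableAt, ?_⟩
    have : deriv F = φ := funext fun u => (hFderiv u).deriv
    rw [this]; exact hφc
  have hg1 : ContDiff ℝ 1 g := (hF1.sub contDiff_const).mul (hφ.of_le (by simp))
  have hgsupp : HasCompactSupport g := hφsupp.mul_left
  have hgcont : Continuous g := hg1.continuous
  have hgint : Integrable g := hgcont.integrable_of_hasCompactSupport hgsupp
  have hgderiv : ∀ u : ℝ, HasDerivAt g ((F u - 1/2) * deriv φ u + φ u ^ 2) u := by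
    intro u
    have h := ((hFderiv u).sub_const (1/2)).mul
      ((hφ.differentiable (by simp) u).hasDerivAt)
    exact h.congr_deriv (by ring)
  have hdg : ∀ u : ℝ, deriv g u = (F u - 1/2) * deriv φ u + φ u ^ 2 :=
    fun u => (hgderiv u).deriv
  have hψc : Continuous ψ := hψ.continuous
  have hψd : Continuous (deriv ψ) := (hψ.of_le (by simp) : ContDiff ℝ 1 ψ).continuous_deriv le_rfl
  -- ∫ g = 0 by oddness
  have hodd : ∀ u : ℝ, g (-u) = - g u := by
    intro u
    have hFF : F u + F (-u) = 1 := by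
      have h1 : (∫ x in Set.Iic u, φ (-x)) = ∫ x in Set.Ioi (-u), φ x :=
        integral_comp_neg_Iic u φ
      have h2 : (∫ x in Set.Iic u, φ (-x)) = F u := by
        simp only [hFdef]
        congr 1; ext x; exact heven x
      rw [h2] at h1
      have h3 := intervalIntegral.integral_Iic_add_Ioi (b := -u) hφint.integrableOn hφint.integrableOn
      have h4 : F (-u) = ∫ x in Set.Iic (-u), φ x := rfl
      rw [hone] at h3
      linarith [h1, h3, h4]
    simp only [hgdef, heven u]
    have : F (-u) = 1 - F u := by linarith
    rw [this]; ring
  have hgzero : ∫ u, g u = 0 := by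
    have h := MeasureTheory.Measure.integral_comp_mul_left g (-1)
    simp only [neg_one_mul, hodd] at h
    rw [integral_neg, abs_inv, abs_neg, abs_one, inv_one, one_smul] at h
    linarith [h]
  -- the key identity for ε > 0
  have hIeq : ∀ ε : ℝ, 0 < ε →
      (∫ x, (((∫ s in Set.Iic (x / ε), φ s) - 1 / 2) * (ε⁻¹ ^ 2 * deriv φ (x / ε))
              + (ε⁻¹ * φ (x / ε)) ^ 2) * ψ x)
        = -∫ u, g u * deriv ψ (ε * u) := by
    intro ε hε
    have hεne : ε ≠ 0 := ne_of_gt hε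
    -- change of variables x = ε u
    have h1 : (∫ x, (((F (x/ε)) - 1/2) * (ε⁻¹^2 * deriv φ (x/ε)) + (ε⁻¹ * φ (x/ε))^2) * ψ x)
        = |ε| • ∫ u, (((F u) - 1/2) * (ε⁻¹^2 * deriv φ u) + (ε⁻¹ * φ u)^2) * ψ (ε * u) := by
      rw [← MeasureTheory.Measure.integral_comp_div
        (fun u => (((F u) - 1/2) * (ε⁻¹^2 * deriv φ u) + (ε⁻¹ * φ u)^2) * ψ (ε * u)) ε]
      congr 1
      ext x
      rw [mul_div_cancel₀ _ hεne]
    -- integration by parts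
    have hcomp1 : Continuous fun u : ℝ => ψ (ε * u) :=
      hψc.comp (continuous_const.mul continuous_id)
    have hcomp2 : Continuous fun u : ℝ => deriv ψ (ε * u) :=
      hψd.comp (continuous_const.mul continuous_id)
    have hA : Integrable (fun u => deriv g u * ψ (ε * u)) := by
      refine Continuous.integrable_of_hasCompactSupport ?_ ?_
      · exact (hg1.continuous_deriv le_rfl).mul hcomp1
      · exact (hgsupp.deriv).mul_right
    have hB : Integrable (fun u => g u * (ε * deriv ψ (ε * u))) := by
      refine Continuous.integrable_of_hasCompactSupport ?_ ?_
      · exact hgcont.mul (continuous_const.mul hcomp2)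
      · exact hgsupp.mul_right
    have hk1 : ContDiff ℝ 1 (fun u => g u * ψ (ε * u)) :=
      hg1.mul ((hψ.of_le (by simp)).comp (contDiff_const.mul contDiff_id))
    have hksupp : HasCompactSupport (fun u => g u * ψ (ε * u)) := hgsupp.mul_right
    have hkderiv : ∀ u : ℝ, HasDerivAt (fun u => g u * ψ (ε * u))
        (deriv g u * ψ (ε * u) + g u * (ε * deriv ψ (ε * u))) u := by
      intro u
      have hlin : HasDerivAt (fun v : ℝ => ε * v) ε u := by simpa using (hasDerivAt_id u).const_mul ε
      have hpsi : HasDerivAt (fun v => ψ (ε * v)) (deriv ψ (ε * u) * ε) u :=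
        ((hψ.differentiable (by simp) (ε * u)).hasDerivAt).comp u hlin
      have := (hgderiv u).mul hpsi
      rw [← hdg u] at this
      exact this.congr_deriv (by ring)
    have hzero : ∫ u, (deriv g u * ψ (ε * u) + g u * (ε * deriv ψ (ε * u))) = 0 := by
      have hdk : (fun u => deriv g u * ψ (ε * u) + g u * (ε * deriv ψ (ε * u)))
          = deriv (fun u => g u * ψ (ε * u)) :=
        funext fun u => ((hkderiv u).deriv).symm
      rw [hdk]
      exact my_integral_deriv_eq_zero hk1 hksupp
    rw [integral_add hA hB] at hzero
    have hIBP : ∫ u, deriv g u * ψ (ε * u) = -(ε * ∫ u, g u * deriv ψ (ε * u)) := by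
      have : ∫ u, g u * (ε * deriv ψ (ε * u)) = ε * ∫ u, g u * deriv ψ (ε * u) := by
        rw [← integral_const_mul]
        congr 1; ext u; ring
      rw [this] at hzero
      linarith
    -- put it together
    have hfact : (fun u => (((F u) - 1/2) * (ε⁻¹^2 * deriv φ u) + (ε⁻¹ * φ u)^2) * ψ (ε * u))
        = fun u => ε⁻¹^2 * (deriv g u * ψ (ε * u)) := by
      funext u
      rw [hdg u]
      ring
    rw [h1, hfact, integral_const_mul, hIBP, abs_of_pos hε, smul_eq_mul]
    field_simp
  -- now the limit
  have hmain : Tendsto (fun ε : ℝ => ∫ u, g u * deriv ψ (ε * u))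
      (nhdsWithin 0 (Set.Ioi 0)) (nhds (∫ u, g u * deriv ψ 0)) := by
    obtain ⟨C, hC⟩ := hψsupp.deriv.exists_bound_of_continuous hψd
    refine tendsto_integral_filter_of_dominated_convergence (fun u => ‖g u‖ * C) ?_ ?_ ?_ ?_
    · filter_upwards with ε
      exact (hgcont.mul (hψd.comp (continuous_const.mul continuous_id))).aestronglyMeasurable
    · filter_upwards with ε
      filter_upwards with u
      rw [norm_mul]
      exact mul_le_mul_of_nonneg_left (hC (ε * u)) (norm_nonneg _)
    · exact hgint.norm.mul_const C
    · filter_upwards with u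
      have h1 : Tendsto (fun ε : ℝ => ε * u) (nhdsWithin 0 (Set.Ioi 0)) (nhds 0) := by
        have h0 : Tendsto (fun ε : ℝ => ε * u) (nhds 0) (nhds (0 * u)) :=
          (continuous_mul_right u).tendsto 0
        have := h0.mono_left (nhdsWithin_le_nhds (s := Set.Ioi 0))
        simpa using this
      have h2 : Tendsto (fun ε : ℝ => deriv ψ (ε * u)) (nhdsWithin 0 (Set.Ioi 0))
          (nhds (deriv ψ 0)) := (hψd.tendsto 0).comp h1
      exact tendsto_const_nhds.mul h2
  have hval : (∫ u, g u * deriv ψ 0) = 0 := by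
    rw [integral_mul_const, hgzero, zero_mul]
  rw [hval] at hmain
  have hneg : Tendsto (fun ε : ℝ => -∫ u, g u * deriv ψ (ε * u))
      (nhdsWithin 0 (Set.Ioi 0)) (nhds 0) := by
    simpa using hmain.neg
  refine hneg.congr' ?_
  filter_upwards [self_mem_nhdsWithin] with ε hε
  exact (hIeq ε hε).symm
end

section
/- For every natural number n ≥ 1 and every test function ψ, the limit as ε → 0⁺ of ∫_ℝ (H_ε(x))^{n−1} · δ_ε(x) · ψ(x) dx equals ψ(0)/n. (This expresses the association θ^{n−1}·θ' ≈ (1/n)θ'.) -/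
open MeasureTheory Filter

/-- For every n ≥ 1 and every test function ψ,
lim_{ε→0⁺} ∫ (H_ε(x))^{n−1}·δ_ε(x)·ψ(x) dx = ψ(0)/n.  (θ^{n−1}·θ' ≈ (1/n)θ'.) -/
theorem stmt_6 (φ : ℝ → ℝ)
    (hφ : ContDiff ℝ (⊤ : ℕ∞) φ) (hφsupp : HasCompactSupport φ)
    (hone : ∫ s, φ s = 1)
    (n : ℕ) (hn : 1 ≤ n)
    (ψ : ℝ → ℝ) (hψ : ContDiff ℝ (⊤ : ℕ∞) ψ) (hψsupp : HasCompactSupport ψ) :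
    Tendsto (fun ε : ℝ =>
        ∫ x, (∫ s in Set.Iic (x / ε), φ s) ^ (n - 1) * (ε⁻¹ * φ (x / ε)) * ψ x)
      (nhdsWithin 0 (Set.Ioi 0)) (nhds (ψ 0 / n)) := by
  have hφc : Continuous φ := hφ.continuous
  have hφint : Integrable φ := hφc.integrable_of_hasCompactSupport hφsupp
  set F : ℝ → ℝ := fun u => ∫ s in Set.Iic u, φ s with hF
  set g : ℝ → ℝ := fun u => F u ^ (n - 1) * φ u with hg
  -- F has derivative φ
  have hFeq : ∀ u : ℝ, F u = F 0 + ∫ t in (0:ℝ)..u, φ t := by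
    intro u
    have := intervalIntegral.integral_Iic_sub_Iic (hφint.integrableOn) (hφint.integrableOn)
      (a := (0:ℝ)) (b := u)
    show (∫ s in Set.Iic u, φ s) = (∫ s in Set.Iic 0, φ s) + _
    linarith [this]
  have hFderiv : ∀ u : ℝ, HasDerivAt F (φ u) u := by
    intro u
    have h1 : HasDerivAt (fun v => F 0 + ∫ t in (0:ℝ)..v, φ t) (φ u) u :=
      (intervalIntegral.integral_hasDerivAt_right (hφint.intervalIntegrable)
        (hφc.stronglyMeasurableAtFilter _ _) hφc.continuousAt).const_add (F 0)
    exact h1.congr_of_eventuallyEq (Filter.Eventually.of_forall fun v => (hFeq v))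
  have hFcont : Continuous F := by
    apply continuous_iff_continuousAt.2
    exact fun u => (hFderiv u).continuousAt
  have hgcont : Continuous g := (hFcont.pow _).mul hφc
  have hgsupp : HasCompactSupport g := by
    apply hφsupp.mono
    intro u hu
    simp only [hg, Function.mem_support, ne_eq] at hu ⊢
    intro h; exact hu (by simp [h])
  have hgint : Integrable g := hgcont.integrable_of_hasCompactSupport hgsupp
  -- bound R for support of φ
  obtain ⟨R, hR⟩ := hφsupp.isCompact.isBounded.subset_closedBall 0
  have hφzero : ∀ u : ℝ, R < |u| → φ u = 0 := by
    intro u hu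
    by_contra h
    have : u ∈ tsupport φ := subset_tsupport φ h
    have := hR this
    rw [Metric.mem_closedBall, Real.dist_eq, sub_zero] at this
    linarith
  set a : ℝ := -(|R| + 1) with ha
  set b : ℝ := |R| + 1 with hb
  have hb0 : (0:ℝ) ≤ b := by rw [hb]; positivity
  have hab : a ≤ b := by rw [ha]; linarith
  have hzout : ∀ u : ℝ, u ∉ Set.Ioc a b → φ u = 0 := by
    intro u hu
    apply hφzero
    simp only [Set.mem_Ioc, not_and_or, not_lt, not_le] at hu
    rcases hu with h | h
    · calc R ≤ |R| := le_abs_self R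
        _ < |R| + 1 := by linarith
        _ = -a := by rw [ha, neg_neg, hb]
        _ ≤ |u| := by rw [ha] at h ⊢; have := neg_le_abs u; linarith
    · calc R ≤ |R| := le_abs_self R
        _ < b := by simp [hb]
        _ ≤ |u| := (le_abs_self u).trans' h.le
  have hFa : F a = 0 := by
    rw [hF]
    apply MeasureTheory.setIntegral_eq_zero_of_forall_eq_zero
    intro u hu
    apply hφzero
    simp only [Set.mem_Iic] at hu
    have h1 : u ≤ a := hu
    have : (0:ℝ) < |R| + 1 := by positivity
    rw [abs_of_nonpos (by rw [ha] at h1; linarith)]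
    rw [ha] at h1
    have := le_abs_self R
    linarith
  have hFb : F b = 1 := by
    rw [hF, ← hone]
    apply MeasureTheory.setIntegral_eq_integral_of_forall_compl_eq_zero
    intro u hu
    simp only [Set.mem_Iic, not_le] at hu
    apply hφzero
    have := le_abs_self R
    have := le_abs_self u
    rw [hb] at hu; linarith
  -- compute ∫ g = 1/n
  have hn' : (n : ℝ) ≠ 0 := by positivity
  have hGderiv : ∀ u ∈ Set.uIcc a b, HasDerivAt (fun v => F v ^ n) ((n : ℝ) * g u) u := by
    intro u _
    have := (hFderiv u).pow n
    show HasDerivAt (F ^ n) _ u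
    have e : (n:ℝ) * g u = ↑n * F u ^ (n - 1) * φ u := by
      show (n:ℝ) * (F u ^ (n - 1) * φ u) = _; ring
    rw [e]; exact this
  have hderint : IntervalIntegrable (fun u => (n:ℝ) * g u) MeasureTheory.volume a b :=
    (continuous_const.mul hgcont).intervalIntegrable a b
  have hintab : ∫ u in a..b, (n:ℝ) * g u = 1 := by
    rw [intervalIntegral.integral_eq_sub_of_hasDerivAt hGderiv hderint, hFa, hFb]
    rw [one_pow, zero_pow (by omega : n ≠ 0)]
    ring
  have hgval : ∫ u, g u = 1 / n := by
    have h1 : ∫ u, g u = ∫ u in Set.Ioc a b, g u := by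
      refine (MeasureTheory.setIntegral_eq_integral_of_forall_compl_eq_zero ?_).symm
      intro u hu
      simp [hg, hzout u hu]
    rw [h1, ← intervalIntegral.integral_of_le hab]
    have h2 : ∫ u in a..b, g u = (1/n) * ∫ u in a..b, (n:ℝ) * g u := by
      rw [← intervalIntegral.integral_const_mul]
      congr 1; funext u; field_simp
    rw [h2, hintab]; ring
  -- step 1: change of variables
  have hstep1 : ∀ ε : ℝ, 0 < ε →
      (∫ x, (∫ s in Set.Iic (x / ε), φ s) ^ (n - 1) * (ε⁻¹ * φ (x / ε)) * ψ x)
        = ∫ u, g u * ψ (ε * u) := by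
    intro ε hε
    have hεne : ε ≠ 0 := ne_of_gt hε
    have h1 : ∀ x : ℝ, (∫ s in Set.Iic (x / ε), φ s) ^ (n - 1) * (ε⁻¹ * φ (x / ε)) * ψ x
        = ε⁻¹ * (g (x / ε) * ψ (ε * (x / ε))) := by
      intro x
      rw [mul_div_cancel₀ _ hεne]
      simp only [hg, hF]
      ring
    simp only [h1]
    rw [MeasureTheory.integral_const_mul,
      MeasureTheory.Measure.integral_comp_div (fun u => g u * ψ (ε * u)) ε,
      abs_of_pos hε, smul_eq_mul, ← mul_assoc, inv_mul_cancel₀ hεne, one_mul]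
  -- step 2: dominated convergence
  obtain ⟨C, hC⟩ := hψsupp.exists_bound_of_continuous hψ.continuous
  have key : Tendsto (fun ε : ℝ => ∫ u, g u * ψ (ε * u))
      (nhdsWithin 0 (Set.Ioi 0)) (nhds (∫ u, g u * ψ 0)) := by
    apply MeasureTheory.tendsto_integral_filter_of_dominated_convergence
      (fun u => ‖g u‖ * C)
    · exact Filter.Eventually.of_forall fun ε =>
        (hgcont.mul (hψ.continuous.comp (continuous_const.mul continuous_id))).aestronglyMeasurable
    · refine Filter.Eventually.of_forall fun ε => Filter.Eventually.of_forall fun u => ?_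
      rw [norm_mul]
      exact mul_le_mul_of_nonneg_left (hC _) (norm_nonneg _)
    · exact hgint.norm.mul_const C
    · refine Filter.Eventually.of_forall fun u => ?_
      apply Tendsto.const_mul
      have h1 : Tendsto (fun ε : ℝ => ε * u) (nhdsWithin 0 (Set.Ioi 0)) (nhds 0) := by
        have := (continuous_id.mul (continuous_const (y := u))).tendsto (0:ℝ)
        have h' : Tendsto (fun ε : ℝ => ε * u) (nhdsWithin 0 (Set.Ioi 0)) (nhds (id 0 * u)) :=
          this.mono_left nhdsWithin_le_nhds
        simpa using h'
      exact (hψ.continuous.tendsto 0).comp h1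
  have hlim : (∫ u, g u * ψ 0) = ψ 0 / n := by
    rw [MeasureTheory.integral_mul_const, hgval]; ring
  rw [← hlim]
  apply key.congr'
  filter_upwards [self_mem_nhdsWithin] with ε hε
  exact (hstep1 ε hε).symm
end

section
/- For every natural number n ≥ 1 and every test function ψ, the limit as ε → 0⁺ of ∫_ℝ ((H_ε(x))^n − H_ε(x)) · ψ(x) dx equals 0. (This expresses the association θ^n ≈ θ in the Colombeau algebra.) -/
open MeasureTheory Filter

/-- For every n ≥ 1 and every test function ψ,
lim_{ε→0⁺} ∫ ((H_ε(x))^n − H_ε(x))·ψ(x) dx = 0.  (θ^n ≈ θ.) -/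
theorem stmt_7 (φ : ℝ → ℝ)
    (hφ : ContDiff ℝ (⊤ : ℕ∞) φ) (hφsupp : HasCompactSupport φ)
    (hone : ∫ s, φ s = 1)
    (n : ℕ) (hn : 1 ≤ n)
    (ψ : ℝ → ℝ) (hψ : ContDiff ℝ (⊤ : ℕ∞) ψ) (hψsupp : HasCompactSupport ψ) :
    Tendsto (fun ε : ℝ =>
        ∫ x, ((∫ s in Set.Iic (x / ε), φ s) ^ n - (∫ s in Set.Iic (x / ε), φ s)) * ψ x)
      (nhdsWithin 0 (Set.Ioi 0)) (nhds 0) := by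
  have hφi : Integrable φ := hφ.continuous.integrable_of_hasCompactSupport hφsupp
  set F : ℝ → ℝ := fun u => ∫ s in Set.Iic u, φ s with hF
  -- continuity of F
  have hFcont : Continuous F := by
    have h1 : ∀ u : ℝ, F u = F 0 + ∫ s in (0:ℝ)..u, φ s := by
      intro u
      have := intervalIntegral.integral_Iic_sub_Iic (μ := volume) (f := φ) (a := (0:ℝ)) (b := u)
        hφi.integrableOn hφi.integrableOn
      linarith [this]
    have : Continuous fun u : ℝ => F 0 + ∫ s in (0:ℝ)..u, φ s :=
      continuous_const.add (hφi.continuous_primitive 0)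
    exact this.congr fun u => (h1 u).symm
  -- support radius of φ
  obtain ⟨R, hR0, hRsub⟩ : ∃ R : ℝ, 0 < R ∧ tsupport φ ⊆ Set.Icc (-R) R := by
    obtain ⟨R, hR⟩ := hφsupp.isCompact.isBounded.subset_closedBall 0
    refine ⟨max R 1, lt_of_lt_of_le one_pos (le_max_right _ _), ?_⟩
    intro x hx
    have := hR hx
    rw [Real.closedBall_eq_Icc] at this
    simp only [zero_sub, zero_add] at this
    constructor
    · linarith [this.1, neg_le_neg (le_max_left R 1)]
    · exact this.2.trans (le_max_left R 1)
  -- F vanishes / equals 1 outside [-R, R]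
  have hFle : ∀ u : ℝ, u < -R → F u = 0 := by
    intro u hu
    apply setIntegral_eq_zero_of_forall_eq_zero
    intro x hx
    by_contra hne
    have hmem := hRsub (subset_closure hne)
    simp only [Set.mem_Icc] at hmem
    have : x ≤ u := hx
    linarith [hmem.1]
  have hFge : ∀ u : ℝ, R < u → F u = 1 := by
    intro u hu
    have : F u = ∫ s, φ s := by
      apply setIntegral_eq_integral_of_forall_compl_eq_zero
      intro x hx
      simp only [Set.mem_Iic, not_le] at hx
      by_contra hne
      have hmem := hRsub (subset_closure hne)
      have : x ≤ R := hmem.2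
      linarith
    rw [this, hone]
  -- bound on F
  set M : ℝ := ∫ s, ‖φ s‖ with hM
  have hM0 : 0 ≤ M := integral_nonneg fun s => norm_nonneg _
  have hFbd : ∀ u : ℝ, |F u| ≤ M := by
    intro u
    calc |F u| ≤ ∫ s in Set.Iic u, ‖φ s‖ := by
          rw [← Real.norm_eq_abs]; exact norm_integral_le_integral_norm _
      _ ≤ M := setIntegral_le_integral hφi.norm
          (Filter.Eventually.of_forall fun s => norm_nonneg _)
  -- bound on ψ
  obtain ⟨C, hC⟩ := hψsupp.exists_bound_of_continuous hψ.continuous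
  have hC0 : 0 ≤ C := le_trans (norm_nonneg _) (hC 0)
  set K : ℝ := (M ^ n + M) * C with hK
  have hK0 : 0 ≤ K := mul_nonneg (by positivity) hC0
  -- pointwise bound on integrand
  have hptbd : ∀ u x : ℝ, ‖(F u ^ n - F u) * ψ x‖ ≤ K := by
    intro u x
    rw [norm_mul]
    apply mul_le_mul _ (hC x) (norm_nonneg _) (by positivity)
    calc ‖F u ^ n - F u‖ ≤ ‖F u ^ n‖ + ‖F u‖ := norm_sub_le _ _
      _ ≤ M ^ n + M := by
          apply add_le_add _ (hFbd u)
          rw [norm_pow]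
          exact pow_le_pow_left₀ (norm_nonneg _) (hFbd u) n
  -- the key bound on the integral for ε > 0
  have hbound : ∀ ε : ℝ, 0 < ε →
      ‖∫ x, (F (x / ε) ^ n - F (x / ε)) * ψ x‖ ≤ 2 * R * K * ε := by
    intro ε hε
    have hsupp : ∀ x : ℝ, x ∉ Set.Icc (-(ε * R)) (ε * R) →
        (F (x / ε) ^ n - F (x / ε)) * ψ x = 0 := by
      intro x hx
      simp only [Set.mem_Icc, not_and_or, not_le] at hx
      rcases hx with hx | hx
      · have : x / ε < -R := by
          rw [div_lt_iff₀ hε]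
          nlinarith
        rw [hFle _ this]
        simp [zero_pow (Nat.one_le_iff_ne_zero.mp hn)]
      · have : R < x / ε := by
          rw [lt_div_iff₀ hε]
          nlinarith
        rw [hFge _ this]
        simp
    have heq : (∫ x, (F (x / ε) ^ n - F (x / ε)) * ψ x)
        = ∫ x in Set.Icc (-(ε * R)) (ε * R), (F (x / ε) ^ n - F (x / ε)) * ψ x :=
      (setIntegral_eq_integral_of_forall_compl_eq_zero hsupp).symm
    rw [heq]
    have hmeas : AEStronglyMeasurable (fun x => (F (x / ε) ^ n - F (x / ε)) * ψ x)
        (volume.restrict (Set.Icc (-(ε * R)) (ε * R))) := by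
      apply Continuous.aestronglyMeasurable
      exact (((hFcont.comp (continuous_id.div_const ε)).pow n).sub
        (hFcont.comp (continuous_id.div_const ε))).mul hψ.continuous
    have hfin : volume (Set.Icc (-(ε * R)) (ε * R)) < ⊤ := by
      rw [Real.volume_Icc]; exact ENNReal.ofReal_lt_top
    calc ‖∫ x in Set.Icc (-(ε * R)) (ε * R), (F (x / ε) ^ n - F (x / ε)) * ψ x‖
        ≤ K * (volume (Set.Icc (-(ε * R)) (ε * R))).toReal :=
          norm_setIntegral_le_of_norm_le_const hfin (fun x _ => hptbd _ _)
      _ ≤ 2 * R * K * ε := by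
          rw [Real.volume_Icc]
          rw [ENNReal.toReal_ofReal (by nlinarith)]
          nlinarith
  -- conclude by squeeze
  have htend : Tendsto (fun ε : ℝ => 2 * R * K * ε) (nhdsWithin 0 (Set.Ioi 0)) (nhds 0) := by
    have : Tendsto (fun ε : ℝ => 2 * R * K * ε) (nhds 0) (nhds (2 * R * K * 0)) :=
      (continuous_const.mul continuous_id).tendsto 0
    rw [mul_zero] at this
    exact this.mono_left nhdsWithin_le_nhds
  apply squeeze_zero_norm' _ htend
  filter_upwards [self_mem_nhdsWithin] with ε hε
  exact hbound ε hε
end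

section
/- Suppose φ is even. For every test function ψ, the limit as ε → 0⁺ of ∫_ℝ (H_ε(x) − 1/2) · δ_ε(x) · ψ(x) dx equals 0. (Equivalently, (H − 1/2)·δ is associated with 0, the key cancellation in the proof of H·δ' ≈ (1/2)δ' − δ².) -/
open MeasureTheory Filter

/-- With φ even, for every test function ψ,
lim_{ε→0⁺} ∫ (H_ε(x) − 1/2)·δ_ε(x)·ψ(x) dx = 0.
((H − 1/2)·δ ≈ 0, the key cancellation in H·δ' ≈ (1/2)δ' − δ².) -/
theorem stmt_17 (φ : ℝ → ℝ)
    (hφ : ContDiff ℝ (⊤ : ℕ∞) φ) (hφsupp : HasCompactSupport φ)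
    (hone : ∫ s, φ s = 1)
    (heven : ∀ s, φ (-s) = φ s)
    (ψ : ℝ → ℝ) (hψ : ContDiff ℝ (⊤ : ℕ∞) ψ) (hψsupp : HasCompactSupport ψ) :
    Tendsto (fun ε : ℝ =>
        ∫ x, ((∫ s in Set.Iic (x / ε), φ s) - 1 / 2) * (ε⁻¹ * φ (x / ε)) * ψ x)
      (nhdsWithin 0 (Set.Ioi 0)) (nhds 0) := by
  set F : ℝ → ℝ := fun u => ∫ s in Set.Iic u, φ s with hF
  have hφc : Continuous φ := hφ.continuous
  have hψc : Continuous ψ := hψ.continuous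
  have hφint : Integrable φ := hφc.integrable_of_hasCompactSupport hφsupp
  -- F continuous
  have hFc : Continuous F := by
    have h1 : ∀ u : ℝ, F u = F 0 + ∫ s in (0:ℝ)..u, φ s := by
      intro u
      rw [← intervalIntegral.integral_Iic_sub_Iic hφint.integrableOn hφint.integrableOn]
      ring
    have := intervalIntegral.continuous_primitive
      (fun a b => hφint.intervalIntegrable) (0 : ℝ) (μ := volume) (f := φ)
    exact (continuous_const.add this).congr fun u => (h1 u).symm
  -- F u + F (-u) = 1
  have hFsum : ∀ u : ℝ, F u + F (-u) = 1 := by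
    intro u
    have h2 : F (-u) = ∫ s in Set.Ioi u, φ s := by
      calc F (-u) = ∫ s in Set.Iic (-u), φ (-s) := by
            refine setIntegral_congr_fun measurableSet_Iic fun s _ => (heven s).symm
        _ = ∫ s in Set.Ioi u, φ s := by rw [integral_comp_neg_Iic]; ring_nf
    rw [h2, intervalIntegral.integral_Iic_add_Ioi hφint.integrableOn hφint.integrableOn, hone]
  set g : ℝ → ℝ := fun u => (F u - 1 / 2) * φ u with hg
  have hgodd : ∀ u, g (-u) = -g u := by
    intro u
    have := hFsum u
    simp only [hg, heven u]
    have : F (-u) = 1 - F u := by linarith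
    rw [this]; ring
  have hgc : Continuous g := (hFc.sub continuous_const).mul hφc
  have hgsupp : HasCompactSupport g := by
    apply HasCompactSupport.mul_left hφsupp
  have hgint : Integrable g := hgc.integrable_of_hasCompactSupport hgsupp
  have hgzero : (∫ u, g u) = 0 := by
    have h := MeasureTheory.integral_neg_eq_self g volume
    simp only [hgodd, integral_neg] at h
    linarith
  -- bound on ψ
  obtain ⟨C, hC⟩ := hψsupp.exists_bound_of_continuous hψc
  have hC0 : 0 ≤ C := le_trans (norm_nonneg _) (hC 0)
  -- rewrite the integral for ε > 0
  have key : ∀ ε : ℝ, ε ∈ Set.Ioi (0:ℝ) →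
      (∫ x, ((∫ s in Set.Iic (x / ε), φ s) - 1 / 2) * (ε⁻¹ * φ (x / ε)) * ψ x)
        = ∫ u, g u * ψ (ε * u) := by
    intro ε hε
    have hε' : (ε : ℝ) ≠ 0 := ne_of_gt hε
    have h3 : ∀ x : ℝ, ((∫ s in Set.Iic (x / ε), φ s) - 1 / 2) * (ε⁻¹ * φ (x / ε)) * ψ x
        = ε⁻¹ * ((fun u => g u * ψ (ε * u)) (x / ε)) := by
      intro x
      simp only [hg, hF]
      rw [mul_div_cancel₀ _ hε']
      ring
    simp only [h3]
    rw [integral_const_mul, MeasureTheory.Measure.integral_comp_div (fun u => g u * ψ (ε * u)) ε,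
      abs_of_pos hε, smul_eq_mul, ← mul_assoc, inv_mul_cancel₀ hε', one_mul]
  -- limit of ∫ g u * ψ (ε u)
  have hlim : Tendsto (fun ε : ℝ => ∫ u, g u * ψ (ε * u))
      (nhdsWithin 0 (Set.Ioi 0)) (nhds 0) := by
    have h0 : (∫ u, g u * ψ 0) = 0 := by
      rw [integral_mul_const, hgzero, zero_mul]
    have hlim' : Tendsto (fun ε : ℝ => ∫ u, g u * ψ (ε * u))
        (nhdsWithin 0 (Set.Ioi 0)) (nhds (∫ u, g u * ψ 0)) := by
      apply tendsto_integral_filter_of_dominated_convergence (fun u => |g u| * C)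
      · filter_upwards with ε
        exact ((hgc.mul (hψc.comp (continuous_const.mul continuous_id))).aestronglyMeasurable)
      · filter_upwards with ε
        filter_upwards with u
        rw [Real.norm_eq_abs, abs_mul]
        exact mul_le_mul_of_nonneg_left ((Real.norm_eq_abs _ ▸ hC (ε * u))) (abs_nonneg _)
      · exact (hgint.abs.mul_const C)
      · filter_upwards with u
        have : Tendsto (fun ε : ℝ => ε * u) (nhdsWithin 0 (Set.Ioi 0)) (nhds 0) := by
          have := (continuous_mul_right u).tendsto (0:ℝ)
          rw [zero_mul] at this
          exact this.mono_left nhdsWithin_le_nhds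
        exact Tendsto.const_mul (g u) ((hψc.tendsto 0).comp this)
    rwa [h0] at hlim'
  exact hlim.congr' (eventually_nhdsWithin_of_forall (fun ε hε => (key ε hε).symm))
end
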